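/- In the underdetermined regime n < d_x with X ∈ ℝ^{d_x×n} of full column rank, noise matrix E with i.i.d. mean-zero columns of covariance Σ_εε independent of X, pre-trained A₀, Δ* = A* − A₀, Y = A*X + E, and FFT solution Â = A₀ + (Y − A₀X)X⁺, the conditional expected excess risk given X equals ‖Σ_xx^{1/2}(I − P_X)Δ*ᵀ‖_F² + (1/n)Tr(Σ_εε)·Tr(Σ_xx Σ̂⁺), where P_X = XX⁺ is the orthogonal projection onto col(X) and Σ̂ = (1/n)XXᵀ. -/

import Mathlib

/-!
Write `X⁺ = (XᵀX)⁻¹Xᵀ`, a left inverse of `X` with `XX⁺ = P_X` symmetric. Then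
`(Â − A*)Σ_xx^{1/2} = −Δ*(I − P_X)Σ_xx^{1/2} + E X⁺Σ_xx^{1/2}` is a fixed matrix plus a term linear
in the noise. Squaring entrywise, the cross terms vanish because the noise is centred, and
independence of the columns makes the noise term contribute `Tr(Σ_εε)‖X⁺Σ_xx^{1/2}‖_F²
= Tr(Σ_εε) Tr(Σ_xx (X⁺)ᵀX⁺)`. Finally `(X⁺)ᵀX⁺` satisfies the Penrose equations for `XXᵀ`,
so uniqueness of the Moore–Penrose inverse gives `Σ̂⁺ = n (X⁺)ᵀX⁺`.
-/

open Matrix MeasureTheory ProbabilityTheory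

/-- Frobenius norm. -/
noncomputable def frobNorm {m n : ℕ} (M : Matrix (Fin m) (Fin n) ℝ) : ℝ :=
  Real.sqrt (∑ i, ∑ j, (M i j) ^ 2)

namespace Matrix

variable {m n R : Type*} [Fintype m] [Fintype n]

/-- The Penrose equations, with transpose in place of conjugate transpose. -/
structure IsMoorePenroseInverse [CommSemiring R] (A : Matrix m n R) (Q : Matrix n m R) :
    Prop where
  mul_mul_self : A * Q * A = A
  self_mul_mul : Q * A * Q = Q
  transpose_mul_right : (A * Q)ᵀ = A * Q
  transpose_mul_left : (Q * A)ᵀ = Q * A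

namespace IsMoorePenroseInverse

theorem unique [CommSemiring R] {A : Matrix m n R} {Q Q' : Matrix n m R}
    (h : IsMoorePenroseInverse A Q) (h' : IsMoorePenroseInverse A Q') : Q = Q' := by
  have hAQ : A * Q = A * Q' :=
    calc A * Q = (A * Q')ᵀ * (A * Q)ᵀ := by
          rw [h'.transpose_mul_right, h.transpose_mul_right, ← Matrix.mul_assoc,
            Matrix.mul_assoc A Q' A, ← Matrix.mul_assoc, h'.mul_mul_self]
      _ = (A * Q * A * Q')ᵀ := by rw [← transpose_mul, ← Matrix.mul_assoc]
      _ = A * Q' := by rw [h.mul_mul_self, h'.transpose_mul_right]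
  have hQA : Q * A = Q' * A :=
    calc Q * A = (Q * A)ᵀ * (Q' * A)ᵀ := by
          rw [h'.transpose_mul_left, h.transpose_mul_left, Matrix.mul_assoc,
            ← Matrix.mul_assoc A, h'.mul_mul_self]
      _ = (Q' * (A * Q * A))ᵀ := by simp only [← transpose_mul, Matrix.mul_assoc]
      _ = Q' * A := by rw [h.mul_mul_self, h'.transpose_mul_left]
  calc Q = Q * A * Q := h.self_mul_mul.symm
    _ = Q' * A * Q' := by rw [hQA, Matrix.mul_assoc, hAQ, ← Matrix.mul_assoc]
    _ = Q' := h'.self_mul_mul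

theorem smul {K : Type*} [Field K] {A : Matrix m n K} {Q : Matrix n m K}
    (h : IsMoorePenroseInverse A Q) {c : K} (hc : c ≠ 0) :
    IsMoorePenroseInverse (c • A) (c⁻¹ • Q) := by
  have hAQ : c • A * c⁻¹ • Q = A * Q := by
    rw [Matrix.smul_mul, Matrix.mul_smul, smul_smul, mul_inv_cancel₀ hc, one_smul]
  have hQA : c⁻¹ • Q * c • A = Q * A := by
    rw [Matrix.smul_mul, Matrix.mul_smul, smul_smul, inv_mul_cancel₀ hc, one_smul]
  refine ⟨?_, ?_, ?_, ?_⟩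
  · rw [hAQ, Matrix.mul_smul, h.mul_mul_self]
  · rw [hQA, Matrix.mul_smul, h.self_mul_mul]
  · rw [hAQ, h.transpose_mul_right]
  · rw [hQA, h.transpose_mul_left]

end IsMoorePenroseInverse

theorem isMoorePenroseInverse_mul_transpose [CommSemiring R] [DecidableEq n]
    {X : Matrix m n R} {L : Matrix n m R} (hLX : L * X = 1) (hXL : (X * L)ᵀ = X * L) :
    IsMoorePenroseInverse (X * Xᵀ) (Lᵀ * L) := by
  have hXtLt : Xᵀ * Lᵀ = 1 := by rw [← transpose_mul, hLX, transpose_one]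
  have hAQ : X * Xᵀ * (Lᵀ * L) = X * L := by
    rw [Matrix.mul_assoc, ← Matrix.mul_assoc Xᵀ, hXtLt, Matrix.one_mul]
  have hQA : Lᵀ * L * (X * Xᵀ) = (X * L)ᵀ := by
    rw [Matrix.mul_assoc, ← Matrix.mul_assoc L, hLX, Matrix.one_mul, transpose_mul]
  refine ⟨?_, ?_, ?_, ?_⟩
  · rw [hAQ, Matrix.mul_assoc, ← Matrix.mul_assoc L, hLX, Matrix.one_mul]
  · rw [hQA, transpose_mul, Matrix.mul_assoc, ← Matrix.mul_assoc Xᵀ, hXtLt, Matrix.one_mul]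
  · rw [hAQ]; exact hXL
  · rw [hQA, transpose_transpose, hXL]

theorem isUnit_of_rank_eq_card {K : Type*} [DecidableEq n] [Field K]
    {A : Matrix n n K} (h : A.rank = Fintype.card n) : IsUnit A := by
  rw [← mulVec_surjective_iff_isUnit]
  refine (LinearMap.range_eq_top (f := A.mulVecLin)).mp (Submodule.eq_top_of_finrank_eq ?_)
  simpa [Matrix.rank] using h

theorem isUnit_transpose_mul_self_of_rank_eq {K : Type*} [DecidableEq n] [Field K] [LinearOrder K]
    [IsStrictOrderedRing K] {X : Matrix m n K} (hX : X.rank = Fintype.card n) : IsUnit (Xᵀ * X) :=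
  isUnit_of_rank_eq_card (by rw [rank_transpose_mul_self, hX])

end Matrix

section frobNorm

variable {m n : ℕ}

theorem frobNorm_sq (M : Matrix (Fin m) (Fin n) ℝ) : frobNorm M ^ 2 = ∑ i, ∑ j, M i j ^ 2 :=
  Real.sq_sqrt (Finset.sum_nonneg fun _ _ => Finset.sum_nonneg fun _ _ => sq_nonneg _)

theorem frobNorm_transpose (M : Matrix (Fin m) (Fin n) ℝ) : frobNorm Mᵀ = frobNorm M := by
  rw [frobNorm, frobNorm, Finset.sum_comm]
  rfl

theorem frobNorm_neg (M : Matrix (Fin m) (Fin n) ℝ) : frobNorm (-M) = frobNorm M := by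
  simp [frobNorm]

theorem frobNorm_sq_eq_trace (M : Matrix (Fin m) (Fin n) ℝ) :
    frobNorm M ^ 2 = (Mᵀ * M).trace := by
  rw [frobNorm_sq, Finset.sum_comm]
  simp [Matrix.trace, Matrix.mul_apply, sq]

end frobNorm

theorem sq_add_sum_mul {κ : Type*} [Fintype κ] (c : ℝ) (x b : κ → ℝ) :
    (c + ∑ k, x k * b k) ^ 2
      = c ^ 2 + ∑ k, 2 * c * b k * x k + ∑ k, ∑ k', b k * b k' * (x k * x k') := by
  have hlin : 2 * c * ∑ k, x k * b k = ∑ k, 2 * c * b k * x k := by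
    rw [Finset.mul_sum]
    exact Finset.sum_congr rfl fun k _ => by ring
  have hquad : (∑ k, x k * b k) ^ 2 = ∑ k, ∑ k', b k * b k' * (x k * x k') := by
    rw [sq, Finset.sum_mul_sum]
    exact Finset.sum_congr rfl fun k _ => Finset.sum_congr rfl fun k' _ => by ring
  rw [add_sq, hlin, hquad]

section Noise

variable {Ω : Type*} [MeasurableSpace Ω] {μ : Measure Ω}

theorem integral_mul_entry_eq_ite {ι κ : Type*} [DecidableEq κ] {E : Ω → Matrix ι κ ℝ}
    {S : Matrix ι ι ℝ} (hIndep : iIndepFun (fun k ω => fun i => E ω i k) μ)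
    (hmean : ∀ i k, ∫ ω, E ω i k ∂μ = 0) (hcov : ∀ k i i', ∫ ω, E ω i k * E ω i' k ∂μ = S i i')
    (hint : ∀ i k, Integrable (fun ω => E ω i k) μ) (i i' : ι) (k k' : κ) :
    ∫ ω, E ω i k * E ω i' k' ∂μ = if k = k' then S i i' else 0 := by
  split_ifs with hk
  · subst hk; exact hcov k i i'
  · have hind : IndepFun (fun ω => E ω i k) (fun ω => E ω i' k') μ :=
      (hIndep.indepFun hk).comp (measurable_pi_apply i) (measurable_pi_apply i')
    rw [hind.integral_fun_mul_eq_mul_integral (hint i k).1 (hint i' k').1, hmean, zero_mul]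

variable [IsProbabilityMeasure μ]

theorem integral_sq_add_sum_mul {κ : Type*} [Fintype κ] [DecidableEq κ] {ξ : κ → Ω → ℝ} {σ2 : ℝ}
    (hmean : ∀ k, ∫ ω, ξ k ω ∂μ = 0)
    (hcorr : ∀ k k', ∫ ω, ξ k ω * ξ k' ω ∂μ = if k = k' then σ2 else 0)
    (hint : ∀ k, Integrable (ξ k) μ) (hint2 : ∀ k k', Integrable (fun ω => ξ k ω * ξ k' ω) μ)
    (c : ℝ) (b : κ → ℝ) :
    Integrable (fun ω => (c + ∑ k, ξ k ω * b k) ^ 2) μ ∧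
      ∫ ω, (c + ∑ k, ξ k ω * b k) ^ 2 ∂μ = c ^ 2 + σ2 * ∑ k, b k ^ 2 := by
  have hlin : Integrable (fun ω => ∑ k, 2 * c * b k * ξ k ω) μ :=
    integrable_finsetSum _ fun k _ => (hint k).const_mul _
  have hquad : ∀ k, Integrable (fun ω => ∑ k', b k * b k' * (ξ k ω * ξ k' ω)) μ :=
    fun k => integrable_finsetSum _ fun k' _ => (hint2 k k').const_mul _
  have hconst_lin : Integrable (fun ω => c ^ 2 + ∑ k, 2 * c * b k * ξ k ω) μ :=
    (integrable_const _).add hlin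
  have hquad_sum : Integrable (fun ω => ∑ k, ∑ k', b k * b k' * (ξ k ω * ξ k' ω)) μ :=
    integrable_finsetSum _ fun k _ => hquad k
  simp only [sq_add_sum_mul c (fun k => ξ k _)]
  refine ⟨hconst_lin.add hquad_sum, ?_⟩
  rw [integral_add hconst_lin hquad_sum, integral_add (integrable_const _) hlin, integral_const,
    integral_finsetSum _ fun k _ => (hint k).const_mul _,
    integral_finsetSum _ fun k _ => hquad k]
  simp only [integral_finsetSum _ fun k' _ => (hint2 _ k').const_mul _, integral_const_mul,
    hmean, hcorr, mul_ite, mul_zero, Finset.sum_ite_eq, Finset.mem_univ, if_true]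
  simp [Finset.mul_sum, sq, mul_comm]

theorem integral_frobNorm_sq_add_mul {dy dx n : ℕ} {E : Ω → Matrix (Fin dy) (Fin n) ℝ}
    {S : Matrix (Fin dy) (Fin dy) ℝ} (hmean : ∀ i k, ∫ ω, E ω i k ∂μ = 0)
    (hcorr : ∀ i k k', ∫ ω, E ω i k * E ω i k' ∂μ = if k = k' then S i i else 0)
    (hint : ∀ i k, Integrable (fun ω => E ω i k) μ)
    (hint2 : ∀ i k k', Integrable (fun ω => E ω i k * E ω i k') μ)
    (C : Matrix (Fin dy) (Fin dx) ℝ) (B : Matrix (Fin n) (Fin dx) ℝ) :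
    ∫ ω, frobNorm (C + E ω * B) ^ 2 ∂μ = frobNorm C ^ 2 + S.trace * frobNorm B ^ 2 := by
  have hentry i j := integral_sq_add_sum_mul (μ := μ) (ξ := fun k ω => E ω i k) (hmean i)
    (hcorr i) (hint i) (hint2 i) (C i j) (fun k => B k j)
  simp only [frobNorm_sq, Matrix.add_apply, mul_apply]
  rw [integral_finsetSum _ fun i _ => integrable_finsetSum _ fun j _ => (hentry i j).1]
  simp only [integral_finsetSum _ fun j _ => (hentry _ j).1, (hentry _ _).2,
    Finset.sum_add_distrib, ← Finset.mul_sum]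
  rw [Finset.sum_comm (f := fun j k => B k j ^ 2), Matrix.trace, Finset.sum_mul]
  rfl

end Noise

theorem fft_sub_mul_eq {R : Type*} [Ring R] {dy dx n : Type*} [Fintype dx] [Fintype n]
    [DecidableEq dx] (A₀ A : Matrix dy dx R) (X : Matrix dx n R) (L : Matrix n dx R)
    (S : Matrix dx dx R) (E : Matrix dy n R) :
    (A₀ + (A * X + E - A₀ * X) * L - A) * S = (A₀ - A) * (1 - X * L) * S + E * (L * S) := by
  simp only [Matrix.add_mul, Matrix.sub_mul, Matrix.mul_sub, Matrix.mul_one, Matrix.mul_assoc]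
  abel

theorem fft_excess_risk_underdetermined_general {dy dx n : ℕ} (hn0 : 0 < n)
    {Ω : Type*} [MeasurableSpace Ω] (μ : Measure Ω) [IsProbabilityMeasure μ]
    (X : Matrix (Fin dx) (Fin n) ℝ) (hX : X.rank = n)
    (Sxx Sx : Matrix (Fin dx) (Fin dx) ℝ)
    (hSx : Sx.PosSemidef) (hSx2 : Sx * Sx = Sxx)
    (See : Matrix (Fin dy) (Fin dy) ℝ)
    (Em : Ω → Matrix (Fin dy) (Fin n) ℝ)
    (hIndep : iIndepFun
      (fun j ω => fun i => Em ω i j) μ)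
    (hmean : ∀ i j, ∫ ω, Em ω i j ∂μ = 0)
    (hcov : ∀ j i i', ∫ ω, Em ω i j * Em ω i' j ∂μ = See i i')
    (hint : ∀ i j, Integrable (fun ω => Em ω i j) μ)
    (hint2 : ∀ i j i' j', Integrable (fun ω => Em ω i j * Em ω i' j') μ)
    (A₀ Astar : Matrix (Fin dy) (Fin dx) ℝ)
    -- `Q` is the Moore–Penrose pseudoinverse of `Σ̂ = (1/n)XXᵀ`
    (Q : Matrix (Fin dx) (Fin dx) ℝ)
    (hQ1 : ((n : ℝ)⁻¹ • (X * Xᵀ)) * Q * ((n : ℝ)⁻¹ • (X * Xᵀ)) = (n : ℝ)⁻¹ • (X * Xᵀ))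
    (hQ2 : Q * ((n : ℝ)⁻¹ • (X * Xᵀ)) * Q = Q)
    (hQ3 : (((n : ℝ)⁻¹ • (X * Xᵀ)) * Q)ᵀ = ((n : ℝ)⁻¹ • (X * Xᵀ)) * Q)
    (hQ4 : (Q * ((n : ℝ)⁻¹ • (X * Xᵀ)))ᵀ = Q * ((n : ℝ)⁻¹ • (X * Xᵀ)))
    (Y : Ω → Matrix (Fin dy) (Fin n) ℝ)
    (hY : ∀ ω, Y ω = Astar * X + Em ω)
    (Ahat : Ω → Matrix (Fin dy) (Fin dx) ℝ)
    (hAhat : ∀ ω, Ahat ω = A₀ + (Y ω - A₀ * X) * ((Xᵀ * X)⁻¹ * Xᵀ)) :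
    ∫ ω, frobNorm ((Ahat ω - Astar) * Sx) ^ 2 ∂μ
      = frobNorm (Sx * (1 - X * ((Xᵀ * X)⁻¹ * Xᵀ)) * (Astar - A₀)ᵀ) ^ 2
        + (n : ℝ)⁻¹ * See.trace * (Sxx * Q).trace := by
  have hnR : (n : ℝ) ≠ 0 := Nat.cast_ne_zero.mpr hn0.ne'
  have hGram : IsUnit (Xᵀ * X) := isUnit_transpose_mul_self_of_rank_eq (by simpa using hX)
  set L := (Xᵀ * X)⁻¹ * Xᵀ with hL
  have hLX : L * X = 1 := by
    rw [Matrix.mul_assoc, nonsing_inv_mul _ ((isUnit_iff_isUnit_det _).mp hGram)]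
  have hXL : (X * L)ᵀ = X * L := by
    rw [hL, transpose_mul, transpose_mul, transpose_nonsing_inv, transpose_mul,
      transpose_transpose, Matrix.mul_assoc]
  clear_value L
  have hSxT : Sxᵀ = Sx := by
    simpa [conjTranspose_eq_transpose_of_trivial] using hSx.isHermitian.eq
  have hQ : Q = (n : ℝ) • (Lᵀ * L) := IsMoorePenroseInverse.unique ⟨hQ1, hQ2, hQ3, hQ4⟩
    (by simpa using (isMoorePenroseInverse_mul_transpose hLX hXL).smul (inv_ne_zero hnR))
  have hbias : frobNorm ((A₀ - Astar) * (1 - X * L) * Sx)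
      = frobNorm (Sx * (1 - X * L) * (Astar - A₀)ᵀ) := by
    rw [← frobNorm_transpose, ← frobNorm_neg]
    congr 1
    rw [transpose_mul, transpose_mul, transpose_sub, transpose_one, hXL, hSxT, ← Matrix.mul_neg,
      ← Matrix.mul_neg, ← transpose_neg, neg_sub, Matrix.mul_assoc]
  have hvar : frobNorm (L * Sx) ^ 2 = (Sxx * (Lᵀ * L)).trace := by
    rw [frobNorm_sq_eq_trace, transpose_mul, hSxT, ← hSx2, Matrix.mul_assoc, Matrix.mul_assoc,
      ← Matrix.mul_assoc Lᵀ, trace_mul_cycle']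
  calc ∫ ω, frobNorm ((Ahat ω - Astar) * Sx) ^ 2 ∂μ
      = ∫ ω, frobNorm ((A₀ - Astar) * (1 - X * L) * Sx + Em ω * (L * Sx)) ^ 2 ∂μ := by
        simp only [hAhat, hY, fft_sub_mul_eq]
    _ = frobNorm ((A₀ - Astar) * (1 - X * L) * Sx) ^ 2 + See.trace * frobNorm (L * Sx) ^ 2 :=
        integral_frobNorm_sq_add_mul hmean
          (fun i k k' => integral_mul_entry_eq_ite hIndep hmean hcov hint i i k k') hint
          (fun i k k' => hint2 i k i k') _ _
    _ = _ := by
        rw [hbias, hvar, hQ, Matrix.mul_smul, trace_smul, smul_eq_mul]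
        field_simp

/-- Exact conditional (given `X`) expected excess risk of FFT in the underdetermined
regime `n < d_x`: with `X` a fixed full-column-rank matrix, noise `E` with i.i.d.
mean-zero columns of covariance `Σ_εε`, `Y = A*X + E`, `Â = A₀ + (Y − A₀X)X⁺`,
`Δ* = A* − A₀`, `P_X = XX⁺`, `Σ̂ = (1/n)XXᵀ` with Moore–Penrose pseudoinverse `Q`,
the expected excess risk equals
`‖Σ_xx^{1/2}(I − P_X)Δ*ᵀ‖_F² + (1/n)Tr(Σ_εε)·Tr(Σ_xx Σ̂⁺)`. -/
theorem fft_excess_risk_underdetermined {dy dx n : ℕ} (hn : n < dx) (hn0 : 0 < n)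
    {Ω : Type*} [MeasurableSpace Ω] (μ : Measure Ω) [IsProbabilityMeasure μ]
    (X : Matrix (Fin dx) (Fin n) ℝ) (hX : X.rank = n)
    (Sxx Sx : Matrix (Fin dx) (Fin dx) ℝ)
    (hSxx : Sxx.PosDef) (hSx : Sx.PosSemidef) (hSx2 : Sx * Sx = Sxx)
    (See : Matrix (Fin dy) (Fin dy) ℝ)
    (Em : Ω → Matrix (Fin dy) (Fin n) ℝ)
    (hIndep : iIndepFun
      (fun j ω => fun i => Em ω i j) μ)
    (hident : ∀ j j' : Fin n,
      Measure.map (fun ω => fun i => Em ω i j) μ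
        = Measure.map (fun ω => fun i => Em ω i j') μ)
    (hmean : ∀ i j, ∫ ω, Em ω i j ∂μ = 0)
    (hcov : ∀ j i i', ∫ ω, Em ω i j * Em ω i' j ∂μ = See i i')
    (hint : ∀ i j, Integrable (fun ω => Em ω i j) μ)
    (hint2 : ∀ i j i' j', Integrable (fun ω => Em ω i j * Em ω i' j') μ)
    (A₀ Astar : Matrix (Fin dy) (Fin dx) ℝ)
    -- `Q` is the Moore–Penrose pseudoinverse of `Σ̂ = (1/n)XXᵀ`
    (Q : Matrix (Fin dx) (Fin dx) ℝ)
    (hQ1 : ((n : ℝ)⁻¹ • (X * Xᵀ)) * Q * ((n : ℝ)⁻¹ • (X * Xᵀ)) = (n : ℝ)⁻¹ • (X * Xᵀ))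
    (hQ2 : Q * ((n : ℝ)⁻¹ • (X * Xᵀ)) * Q = Q)
    (hQ3 : (((n : ℝ)⁻¹ • (X * Xᵀ)) * Q)ᵀ = ((n : ℝ)⁻¹ • (X * Xᵀ)) * Q)
    (hQ4 : (Q * ((n : ℝ)⁻¹ • (X * Xᵀ)))ᵀ = Q * ((n : ℝ)⁻¹ • (X * Xᵀ)))
    (Y : Ω → Matrix (Fin dy) (Fin n) ℝ)
    (hY : ∀ ω, Y ω = Astar * X + Em ω)
    (Ahat : Ω → Matrix (Fin dy) (Fin dx) ℝ)
    (hAhat : ∀ ω, Ahat ω = A₀ + (Y ω - A₀ * X) * ((Xᵀ * X)⁻¹ * Xᵀ)) :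
    ∫ ω, frobNorm ((Ahat ω - Astar) * Sx) ^ 2 ∂μ
      = frobNorm (Sx * (1 - X * ((Xᵀ * X)⁻¹ * Xᵀ)) * (Astar - A₀)ᵀ) ^ 2
        + (n : ℝ)⁻¹ * See.trace * (Sxx * Q).trace :=
  fft_excess_risk_underdetermined_general hn0 μ X hX Sxx Sx hSx hSx2 See Em hIndep hmean hcov hint
    hint2 A₀ Astar Q hQ1 hQ2 hQ3 hQ4 Y hY Ahat hAhat
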